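/- Let d_1, …, d_M be distinct non-negative integers, and set φ̃_v(x) = e^{x²/2}·h̃_v(x) and φ_0(x) = e^{−x²/2}. Then for all real x, W[φ̃_{d_1}, φ̃_{d_2}, …, φ̃_{d_M}, φ_0](x) = (−1)^M · φ_0(x) · W[φ̃_{d_1+1}, φ̃_{d_2+1}, …, φ̃_{d_M+1}](x). -/

import Mathlib

open Polynomial

/-- The Wronskian of `n` real functions: `W[f₁,…,fₙ](x) = det(f_k^{(j-1)}(x))`. -/
noncomputable def wronskian (n : ℕ) (f : Fin n → ℝ → ℝ) (x : ℝ) : ℝ :=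
  Matrix.det (Matrix.of fun j k : Fin n => iteratedDeriv (j : ℕ) (f k) x)

/-- Twisted Hermite polynomials `h̃_v(x) = i^{−v} H_v(ix)`:
`h̃₀ = 1`, `h̃_{v+1} = 2x·h̃_v + h̃_v'`. -/
noncomputable def hermiteTwist : ℕ → Polynomial ℝ
  | 0 => 1
  | v + 1 => 2 * X * hermiteTwist v + Polynomial.derivative (hermiteTwist v)

/-- Pseudo virtual state wavefunctions of the harmonic oscillator. -/
noncomputable def phiTilde (v : ℕ) (x : ℝ) : ℝ :=
  Real.exp (x ^ 2 / 2) * (hermiteTwist v).eval x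

/-- The harmonic oscillator groundstate. -/
noncomputable def phiZero (x : ℝ) : ℝ := Real.exp (-(x ^ 2) / 2)

open Finset

lemma contDiff_poly (p : Polynomial ℝ) : ContDiff ℝ (⊤ : ℕ∞) fun x : ℝ => p.eval x := by
  induction p using Polynomial.induction_on' with
  | add p q hp hq => simpa using hp.add hq
  | monomial n a =>
      simpa [Polynomial.eval_monomial] using (contDiff_const (c := a)).mul (contDiff_id.pow n)

lemma diff_of_top {f : ℝ → ℝ} (hf : ContDiff ℝ (⊤ : ℕ∞) f) (m : ℕ) :
    Differentiable ℝ (iteratedDeriv m f) :=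
  hf.differentiable_iteratedDeriv m (WithTop.coe_lt_coe.mpr (ENat.coe_lt_top m))

lemma iteratedDeriv_leibniz (f g : ℝ → ℝ) (hf : ContDiff ℝ (⊤ : ℕ∞) f) (hg : ContDiff ℝ (⊤ : ℕ∞) g) :
    ∀ n : ℕ, iteratedDeriv n (fun y => f y * g y)
      = fun x => ∑ i ∈ range (n + 1),
          (n.choose i : ℝ) * (iteratedDeriv i f x * iteratedDeriv (n - i) g x) := by
  intro n
  induction n with
  | zero => simp
  | succ n ih =>
      rw [iteratedDeriv_succ, ih]
      funext x
      rw [deriv_fun_sum (fun i _ => by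
        exact (((diff_of_top hf i).differentiableAt.mul
          (diff_of_top hg (n - i)).differentiableAt)).const_mul _)]
      have hterm : ∀ i ∈ range (n + 1),
          deriv (fun x => (n.choose i : ℝ) * (iteratedDeriv i f x * iteratedDeriv (n - i) g x)) x
            = (n.choose i : ℝ) * (iteratedDeriv (i + 1) f x * iteratedDeriv (n - i) g x
                + iteratedDeriv i f x * iteratedDeriv (n + 1 - i) g x) := by
        intro i hi
        rw [deriv_const_mul _ ((diff_of_top hf i).differentiableAt.fun_mul
            (diff_of_top hg (n - i)).differentiableAt),
          deriv_fun_mul (diff_of_top hf i).differentiableAt (diff_of_top hg (n - i)).differentiableAt]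
        rw [← iteratedDeriv_succ, ← iteratedDeriv_succ]
        have hin : i ≤ n := by simpa [Nat.lt_succ_iff] using mem_range.mp hi
        rw [Nat.succ_sub hin]
      rw [Finset.sum_congr rfl hterm]
      rw [Finset.sum_choose_succ_mul (fun i j => iteratedDeriv i f x * iteratedDeriv j g x) n]
      simp only [mul_add, Finset.sum_add_distrib]
      ring

lemma wronskian_smul (n : ℕ) (g : ℝ → ℝ) (f : Fin n → ℝ → ℝ)
    (hg : ContDiff ℝ (⊤ : ℕ∞) g) (hf : ∀ k, ContDiff ℝ (⊤ : ℕ∞) (f k)) (x : ℝ) :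
    wronskian n (fun k => fun y => g y * f k y) x = g x ^ n * wronskian n f x := by
  classical
  have hfact : (Matrix.of fun j k : Fin n => iteratedDeriv (j : ℕ) (fun y => g y * f k y) x)
      = (Matrix.of fun j i : Fin n =>
          if (i : ℕ) ≤ (j : ℕ) then ((j : ℕ).choose i : ℝ) * iteratedDeriv ((j : ℕ) - i) g x
          else 0)
        * (Matrix.of fun i k : Fin n => iteratedDeriv (i : ℕ) (f k) x) := by
    ext j k
    rw [Matrix.mul_apply]
    simp only [Matrix.of_apply]
    rw [Fin.sum_univ_eq_sum_range (fun i : ℕ =>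
      (if i ≤ (j : ℕ) then ((j : ℕ).choose i : ℝ) * iteratedDeriv ((j : ℕ) - i) g x else 0)
        * iteratedDeriv i (f k) x) n]
    rw [← Finset.sum_subset (Finset.range_subset_range.mpr (Nat.succ_le_of_lt j.isLt))
      (fun i _ hi => by
        have : ¬ i ≤ (j : ℕ) := by simpa [Nat.lt_succ_iff] using hi
        simp [this])]
    rw [congrFun (iteratedDeriv_leibniz g (f k) hg (hf k) (j : ℕ)) x]
    rw [← Finset.sum_range_reflect]
    refine Finset.sum_congr rfl fun i hi => ?_
    have hij : i ≤ (j : ℕ) := by simpa [Nat.lt_succ_iff] using Finset.mem_range.mp hi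
    have h1 : (j : ℕ) + 1 - 1 - i = (j : ℕ) - i := by omega
    have h2 : (j : ℕ) - ((j : ℕ) - i) = i := by omega
    rw [h1, h2, if_pos hij, Nat.choose_symm hij]
    ring
  show Matrix.det _ = g x ^ n * Matrix.det _
  rw [hfact, Matrix.det_mul]
  congr 1
  rw [Matrix.det_of_lowerTriangular _ (by
    intro i j hij
    have h2 : i < j := hij
    have h : ¬ ((j : ℕ) ≤ (i : ℕ)) := not_le.mpr (by exact_mod_cast h2)
    simp only [Matrix.of_apply, if_neg h])]
  have : ∀ i : Fin n, (Matrix.of fun j i : Fin n =>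
      if (i : ℕ) ≤ (j : ℕ) then ((j : ℕ).choose i : ℝ) * iteratedDeriv ((j : ℕ) - i) g x
      else 0) i i = g x := fun i => by simp
  simp [this]

lemma iteratedDeriv_const_fun (c : ℝ) : ∀ j : ℕ, iteratedDeriv (j + 1) (fun _ : ℝ => c) = fun _ => 0 := by
  intro j
  induction j generalizing c with
  | zero => funext y; simp [iteratedDeriv_one]
  | succ j ih =>
      rw [iteratedDeriv_succ', deriv_const']
      exact ih 0

lemma wronskian_snoc_one (n : ℕ) (f : Fin n → ℝ → ℝ) (x : ℝ) :
    wronskian (n + 1) (Fin.snoc f (fun _ => (1 : ℝ))) x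
      = (-1 : ℝ) ^ n * wronskian n (fun k => deriv (f k)) x := by
  classical
  show Matrix.det _ = _
  rw [Matrix.det_succ_column _ (Fin.last n)]
  rw [Finset.sum_eq_single 0]
  · simp only [Matrix.of_apply, Fin.snoc_last, Fin.val_zero, iteratedDeriv_zero]
    rw [Fin.val_last, zero_add, mul_one]
    congr 1
    show Matrix.det _ = Matrix.det _
    congr 1
    ext j k
    simp only [Matrix.submatrix_apply, Matrix.of_apply, Fin.succAbove_last, Fin.zero_succAbove,
      Fin.snoc_castSucc, Fin.val_succ]
    rw [iteratedDeriv_succ']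
  · intro i _ hi
    obtain ⟨j, rfl⟩ := Fin.eq_succ_of_ne_zero hi
    simp only [Matrix.of_apply, Fin.snoc_last, Fin.val_succ]
    rw [congrFun (iteratedDeriv_const_fun 1 j) x]
    ring
  · simp

lemma hE : ContDiff ℝ (⊤ : ℕ∞) (fun y : ℝ => Real.exp (y ^ 2)) :=
  Real.contDiff_exp.comp (contDiff_id.pow 2)

lemma hE2 : ContDiff ℝ (⊤ : ℕ∞) (fun y : ℝ => Real.exp (y ^ 2 / 2)) :=
  Real.contDiff_exp.comp ((contDiff_id.pow 2).div_const 2)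

lemma hphiZero : ContDiff ℝ (⊤ : ℕ∞) phiZero :=
  Real.contDiff_exp.comp (((contDiff_id.pow 2).neg).div_const 2)

lemma deriv_expsq_mul (v : ℕ) :
    deriv (fun y : ℝ => Real.exp (y ^ 2) * (hermiteTwist v).eval y)
      = fun y => Real.exp (y ^ 2) * (hermiteTwist (v + 1)).eval y := by
  funext y
  have h1 : HasDerivAt (fun y : ℝ => Real.exp (y ^ 2)) (Real.exp (y ^ 2) * (2 * y)) y := by
    have := (Real.hasDerivAt_exp (y ^ 2)).comp y (hasDerivAt_pow 2 y)
    simpa [mul_comm, Function.comp_def] using this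
  have h2 : HasDerivAt (fun y : ℝ => (hermiteTwist v).eval y)
      ((Polynomial.derivative (hermiteTwist v)).eval y) y := (hermiteTwist v).hasDerivAt y
  rw [(h1.fun_mul h2).deriv]
  show _ = Real.exp (y ^ 2) * (2 * X * hermiteTwist v + Polynomial.derivative (hermiteTwist v)).eval y
  simp only [eval_add, eval_mul, eval_ofNat, eval_X]
  ring

/-- appending the groundstate `φ₀` to a Wronskian of pseudo virtual
state wavefunctions raises all labels:
`W[φ̃_{d₁},…,φ̃_{d_M},φ₀](x) = (−1)^M · φ₀(x) · W[φ̃_{d₁+1},…,φ̃_{d_M+1}](x)`. -/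
theorem pseudo_virtual_wronskian_snoc_groundstate
    (M : ℕ) (d : Fin M → ℕ) (hd : Function.Injective d) :
    ∀ x : ℝ,
      wronskian (M + 1) (Fin.snoc (fun j => phiTilde (d j)) phiZero) x
        = (-1 : ℝ) ^ M * phiZero x
            * wronskian M (fun j => phiTilde (d j + 1)) x := by
  intro x
  have hcol : (Fin.snoc (fun j => phiTilde (d j)) phiZero : Fin (M + 1) → ℝ → ℝ)
      = fun k => fun y => phiZero y
          * (Fin.snoc (fun j => fun y : ℝ => Real.exp (y ^ 2) * (hermiteTwist (d j)).eval y)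
              (fun _ => (1 : ℝ)) : Fin (M + 1) → ℝ → ℝ) k y := by
    funext k
    refine Fin.lastCases ?_ ?_ k
    · funext y; simp [Fin.snoc_last, phiZero]
    · intro j; funext y
      simp only [Fin.snoc_castSucc]
      rw [phiTilde, phiZero, ← mul_assoc, ← Real.exp_add]
      have : -(y ^ 2) / 2 + y ^ 2 = y ^ 2 / 2 := by ring
      rw [this]
  rw [hcol, wronskian_smul (M + 1) phiZero _ hphiZero (fun k => by
    refine Fin.lastCases ?_ ?_ k
    · simpa [Fin.snoc_last] using (contDiff_const : ContDiff ℝ (⊤ : ℕ∞) fun _ : ℝ => (1 : ℝ))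
    · intro j
      simpa [Fin.snoc_castSucc] using hE.mul (contDiff_poly (hermiteTwist (d j)))) x]
  rw [wronskian_snoc_one]
  have hder : (fun k : Fin M => deriv (fun y : ℝ => Real.exp (y ^ 2) * (hermiteTwist (d k)).eval y))
      = fun k => fun y => Real.exp (y ^ 2 / 2) * phiTilde (d k + 1) y := by
    funext k
    rw [deriv_expsq_mul (d k)]
    funext y
    rw [phiTilde, ← mul_assoc, ← Real.exp_add]
    have : y ^ 2 / 2 + y ^ 2 / 2 = y ^ 2 := by ring
    rw [this]
  rw [hder, wronskian_smul M (fun y => Real.exp (y ^ 2 / 2)) (fun k => phiTilde (d k + 1)) hE2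
    (fun k => hE2.mul (contDiff_poly (hermiteTwist (d k + 1)))) x]
  have key : phiZero x ^ (M + 1) * Real.exp (x ^ 2 / 2) ^ M = phiZero x := by
    rw [pow_succ, mul_comm (phiZero x ^ M) (phiZero x), mul_assoc, ← mul_pow, phiZero,
      ← Real.exp_add]
    have : -(x ^ 2) / 2 + x ^ 2 / 2 = 0 := by ring
    rw [this, Real.exp_zero, one_pow, mul_one]
  calc phiZero x ^ (M + 1) * ((-1 : ℝ) ^ M
        * (Real.exp (x ^ 2 / 2) ^ M * wronskian M (fun j => phiTilde (d j + 1)) x))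
      = (-1 : ℝ) ^ M * (phiZero x ^ (M + 1) * Real.exp (x ^ 2 / 2) ^ M)
          * wronskian M (fun j => phiTilde (d j + 1)) x := by ring
    _ = (-1 : ℝ) ^ M * phiZero x * wronskian M (fun j => phiTilde (d j + 1)) x := by rw [key]
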